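/- Let 𝒞 be an additive category, ℱ, 𝒢 additive endofunctors, and bar an additive endofunctor that is the identity on objects and an involution on morphisms. Let f : ℱ → 𝒢 be a natural transformation, and let ∂ : Hom(A,B) → Hom(𝒢A, ℱB) satisfy: (1) ∂ is ℤ-linear; (2) 𝒢(φ − φ̄) = f_B ∘ ∂φ and ℱ(φ − φ̄) = ∂φ ∘ f_A; (3) ∂(ψ∘φ) = ∂ψ ∘ 𝒢φ + ℱψ̄ ∘ ∂φ = ∂ψ ∘ 𝒢φ̄ + ℱψ ∘ ∂φ. Then for any bounded chain complex C over 𝒞 with differential d, the mapping cones Cone(f_C : ℱC → 𝒢C) and Cone(f_{C̄} : ℱC̄ → 𝒢C̄) are isomorphic as chain complexes, where C̄ is C with differential d̄. -/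

import Mathlib

/-!
Both cones have underlying objects `ℱCⁿ⁺¹ ⊞ 𝒢Cⁿ`; only the differentials `d` and `d̄` differ.
The unitriangular matrix with off-diagonal entry `∂d` intertwines the two cone differentials:
the discrepancies `ℱ(d - d̄) = f ≫ ∂d` and `𝒢(d - d̄) = ∂d ≫ f` are absorbed by (2), and
`𝒢d ≫ ∂d + ∂d ≫ ℱd̄ = ∂(d ≫ d) = 0` by the Leibniz rule (3).
-/

open CategoryTheory CategoryTheory.Limits

namespace Stmt9

variable {𝒞 : Type*} [Category 𝒞] [Preadditive 𝒞] [HasBinaryBiproducts 𝒞]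

/-- Given an operation `bar` on morphisms which is additive and compatible with
composition, the complex `C̄` obtained from `C` by applying `bar` to its differential. -/
def barComplex (bar : ∀ {A B : 𝒞}, (A ⟶ B) → (A ⟶ B))
    (hadd : ∀ {A B : 𝒞} (φ ψ : A ⟶ B), bar (φ + ψ) = bar φ + bar ψ)
    (hcomp : ∀ {A B D : 𝒞} (φ : A ⟶ B) (ψ : B ⟶ D), bar (φ ≫ ψ) = bar φ ≫ bar ψ)
    (C : CochainComplex 𝒞 ℤ) : CochainComplex 𝒞 ℤ where
  X := C.X
  d i j := bar (C.d i j)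
  shape i j hij := by
    have h0 : bar (0 : C.X i ⟶ C.X j) = 0 := by
      have := hadd (0 : C.X i ⟶ C.X j) 0
      simp only [add_zero] at this
      exact (left_eq_add.mp this)
    try dsimp only
    rw [C.shape i j hij, h0]
  d_comp_d' i j k _ _ := by
    try dsimp only
    rw [← hcomp, C.d_comp_d]
    have := hadd (0 : C.X i ⟶ C.X k) 0
    simp only [add_zero] at this
    exact (left_eq_add.mp this)

section

open CochainComplex

variable {K₁ L₁ K₂ L₂ K₃ L₃ : CochainComplex 𝒞 ℤ} (φ₁ : K₁ ⟶ L₁) (φ₂ : K₂ ⟶ L₂) (φ₃ : K₃ ⟶ L₃)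

/-- The matrix `((a, 0), (h, b))` with respect to `Cone(φ)ⁿ = Kⁿ⁺¹ ⊞ Lⁿ`. -/
noncomputable def mappingConeTriangularX (a : ∀ k, K₁.X k ⟶ K₂.X k)
    (h : ∀ k, L₁.X k ⟶ K₂.X (k + 1)) (b : ∀ k, L₁.X k ⟶ L₂.X k) (n : ℤ) :
    (mappingCone φ₁).X n ⟶ (mappingCone φ₂).X n :=
  (mappingCone.fst φ₁).1.v n (n + 1) rfl ≫ a (n + 1) ≫ (mappingCone.inl φ₂).v (n + 1) n (by lia) +
    (mappingCone.snd φ₁).v n n (add_zero n) ≫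
      (h n ≫ (mappingCone.inl φ₂).v (n + 1) n (by lia) + b n ≫ (mappingCone.inr φ₂).f n)

variable (a : ∀ k, K₁.X k ⟶ K₂.X k) (h : ∀ k, L₁.X k ⟶ K₂.X (k + 1))
  (b : ∀ k, L₁.X k ⟶ L₂.X k)

@[simp]
lemma inl_v_mappingConeTriangularX (n : ℤ) :
    (mappingCone.inl φ₁).v (n + 1) n (by lia) ≫ mappingConeTriangularX φ₁ φ₂ a h b n =
      a (n + 1) ≫ (mappingCone.inl φ₂).v (n + 1) n (by lia) := by
  simp [mappingConeTriangularX]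

@[simp]
lemma inr_f_mappingConeTriangularX (n : ℤ) :
    (mappingCone.inr φ₁).f n ≫ mappingConeTriangularX φ₁ φ₂ a h b n =
      h n ≫ (mappingCone.inl φ₂).v (n + 1) n (by lia) + b n ≫ (mappingCone.inr φ₂).f n := by
  simp [mappingConeTriangularX]

lemma mappingConeTriangularX_comp (a' : ∀ k, K₂.X k ⟶ K₃.X k)
    (h' : ∀ k, L₂.X k ⟶ K₃.X (k + 1)) (b' : ∀ k, L₂.X k ⟶ L₃.X k) (n : ℤ) :
    mappingConeTriangularX φ₁ φ₂ a h b n ≫ mappingConeTriangularX φ₂ φ₃ a' h' b' n =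
      mappingConeTriangularX φ₁ φ₃ (fun k => a k ≫ a' k)
        (fun k => h k ≫ a' (k + 1) + b k ≫ h' k) (fun k => b k ≫ b' k) n := by
  rw [mappingCone.ext_from_iff φ₁ (n + 1) n rfl]
  constructor
  · simp [reassoc_of% (inl_v_mappingConeTriangularX φ₁ φ₂ a h b n)]
  · simp only [reassoc_of% (inr_f_mappingConeTriangularX φ₁ φ₂ a h b n),
      inr_f_mappingConeTriangularX, Preadditive.add_comp, Preadditive.comp_add, Category.assoc,
      inl_v_mappingConeTriangularX]
    abel

lemma mappingConeTriangularX_id (n : ℤ) :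
    mappingConeTriangularX φ₁ φ₁ (fun _ => 𝟙 _) (fun _ => 0) (fun _ => 𝟙 _) n = 𝟙 _ := by
  rw [mappingCone.ext_from_iff φ₁ (n + 1) n rfl]
  simp

lemma mappingConeTriangularX_comm
    (hKK : ∀ k, K₁.d k (k + 1) ≫ a (k + 1) = a k ≫ K₂.d k (k + 1) + φ₁.f k ≫ h k)
    (hKL : ∀ k, L₁.d k (k + 1) ≫ h (k + 1) = -(h k ≫ K₂.d (k + 1) (k + 1 + 1)))
    (hLK : ∀ k, φ₁.f k ≫ b k = a k ≫ φ₂.f k)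
    (hLL : ∀ k, L₁.d k (k + 1) ≫ b (k + 1) = b k ≫ L₂.d k (k + 1) + h k ≫ φ₂.f (k + 1))
    (n : ℤ) :
    mappingConeTriangularX φ₁ φ₂ a h b n ≫ (mappingCone φ₂).d n (n + 1) =
      (mappingCone φ₁).d n (n + 1) ≫ mappingConeTriangularX φ₁ φ₂ a h b (n + 1) := by
  rw [mappingCone.ext_from_iff φ₁ (n + 1) n rfl]
  constructor
  · rw [reassoc_of% (inl_v_mappingConeTriangularX φ₁ φ₂ a h b n),
      mappingCone.inl_v_d_assoc φ₁ (n + 1) n (n + 1 + 1) (by lia) (by lia),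
      mappingCone.inl_v_d φ₂ (n + 1) n (n + 1 + 1) (by lia) (by lia)]
    simp only [Preadditive.sub_comp, Preadditive.comp_sub, Category.assoc,
      inl_v_mappingConeTriangularX, inr_f_mappingConeTriangularX, Preadditive.comp_add]
    simp only [← Category.assoc, hKK (n + 1), ← hLK (n + 1)]
    simp only [Preadditive.add_comp, Category.assoc]
    abel
  · rw [reassoc_of% (inr_f_mappingConeTriangularX φ₁ φ₂ a h b n), mappingCone.inr_f_d_assoc,
      inr_f_mappingConeTriangularX]
    simp only [Preadditive.add_comp, Category.assoc,
      mappingCone.inl_v_d φ₂ (n + 1) n (n + 1 + 1) (by lia) (by lia),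
      mappingCone.inr_f_d, Preadditive.comp_add, Preadditive.comp_sub]
    simp only [← Category.assoc, hKL n, hLL n]
    simp only [Preadditive.add_comp, Preadditive.neg_comp, Category.assoc]
    abel

noncomputable def mappingConeIsoOfTriangular (a : ∀ k, K₁.X k ≅ K₂.X k)
    (b : ∀ k, L₁.X k ≅ L₂.X k)
    (hKK : ∀ k, K₁.d k (k + 1) ≫ (a (k + 1)).hom = (a k).hom ≫ K₂.d k (k + 1) + φ₁.f k ≫ h k)
    (hKL : ∀ k, L₁.d k (k + 1) ≫ h (k + 1) = -(h k ≫ K₂.d (k + 1) (k + 1 + 1)))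
    (hLK : ∀ k, φ₁.f k ≫ (b k).hom = (a k).hom ≫ φ₂.f k)
    (hLL : ∀ k, L₁.d k (k + 1) ≫ (b (k + 1)).hom =
      (b k).hom ≫ L₂.d k (k + 1) + h k ≫ φ₂.f (k + 1)) :
    mappingCone φ₁ ≅ mappingCone φ₂ :=
  HomologicalComplex.Hom.isoOfComponents
    (fun n =>
      { hom := mappingConeTriangularX φ₁ φ₂ (fun k => (a k).hom) h (fun k => (b k).hom) n
        inv := mappingConeTriangularX φ₂ φ₁ (fun k => (a k).inv)
          (fun k => -((b k).inv ≫ h k ≫ (a (k + 1)).inv)) (fun k => (b k).inv) n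
        hom_inv_id := by
          rw [mappingConeTriangularX_comp, ← mappingConeTriangularX_id φ₁ n]
          congr 1 <;> ext <;> simp
        inv_hom_id := by
          rw [mappingConeTriangularX_comp, ← mappingConeTriangularX_id φ₂ n]
          congr 1 <;> ext <;> simp })
    (by
      rintro n _ rfl
      exact mappingConeTriangularX_comm φ₁ φ₂ _ h _ hKK hKL hLK hLL n)

end

theorem cone_lemma_general (F G : 𝒞 ⥤ 𝒞) [F.Additive] [G.Additive]
    (bar : ∀ {A B : 𝒞}, (A ⟶ B) → (A ⟶ B))
    (hadd : ∀ {A B : 𝒞} (φ ψ : A ⟶ B), bar (φ + ψ) = bar φ + bar ψ)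
    (hcomp : ∀ {A B D : 𝒞} (φ : A ⟶ B) (ψ : B ⟶ D), bar (φ ≫ ψ) = bar φ ≫ bar ψ)
    (f : F ⟶ G)
    (del : ∀ {A B : 𝒞}, (A ⟶ B) → (G.obj A ⟶ F.obj B))
    (hdel_sub : ∀ {A B : 𝒞} (φ ψ : A ⟶ B), del (φ - ψ) = del φ - del ψ)
    (hdelG : ∀ {A B : 𝒞} (φ : A ⟶ B), G.map (φ - bar φ) = del φ ≫ f.app B)
    (hdelF : ∀ {A B : 𝒞} (φ : A ⟶ B), F.map (φ - bar φ) = f.app A ≫ del φ)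
    (hLeibniz : ∀ {A B D : 𝒞} (φ : A ⟶ B) (ψ : B ⟶ D),
      del (φ ≫ ψ) = G.map φ ≫ del ψ + del φ ≫ F.map (bar ψ) ∧
      del (φ ≫ ψ) = G.map (bar φ) ≫ del ψ + del φ ≫ F.map ψ)
    (C : CochainComplex 𝒞 ℤ) :
    Nonempty
      (CochainComplex.mappingCone
          ((NatTrans.mapHomologicalComplex f (ComplexShape.up ℤ)).app C) ≅
        CochainComplex.mappingCone
          ((NatTrans.mapHomologicalComplex f (ComplexShape.up ℤ)).app
            (barComplex bar hadd hcomp C))) := by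
  have hdel_zero : ∀ {A B : 𝒞}, del (0 : A ⟶ B) = 0 := by
    intro A B
    simpa using hdel_sub (0 : A ⟶ B) 0
  have hF (k : ℤ) : F.map (C.d k (k + 1)) ≫ 𝟙 _ =
      𝟙 _ ≫ F.map (bar (C.d k (k + 1))) + f.app (C.X k) ≫ del (C.d k (k + 1)) := by
    rw [Category.comp_id, Category.id_comp, ← hdelF, Functor.map_sub]
    abel
  have hGF (k : ℤ) : G.map (C.d k (k + 1)) ≫ del (C.d (k + 1) (k + 1 + 1)) =
      -(del (C.d k (k + 1)) ≫ F.map (bar (C.d (k + 1) (k + 1 + 1)))) := by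
    have hLeibniz_d_d := (hLeibniz (C.d k (k + 1)) (C.d (k + 1) (k + 1 + 1))).1
    rw [C.d_comp_d, hdel_zero] at hLeibniz_d_d
    exact eq_neg_of_add_eq_zero_left hLeibniz_d_d.symm
  have hf (k : ℤ) : f.app (C.X k) ≫ 𝟙 _ = 𝟙 _ ≫ f.app (C.X k) := by
    rw [Category.comp_id, Category.id_comp]
  have hG (k : ℤ) : G.map (C.d k (k + 1)) ≫ 𝟙 _ =
      𝟙 _ ≫ G.map (bar (C.d k (k + 1))) + del (C.d k (k + 1)) ≫ f.app (C.X (k + 1)) := by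
    rw [Category.comp_id, Category.id_comp, ← hdelG, Functor.map_sub]
    abel
  exact ⟨mappingConeIsoOfTriangular _ _ (fun k => del (C.d k (k + 1)))
    (fun k => Iso.refl (F.obj (C.X k))) (fun k => Iso.refl (G.obj (C.X k))) hF hGF hf hG⟩

/-- The mapping cone lemma: if `𝒞` is an additive category, `ℱ`, `𝒢` additive
endofunctors, `bar` an additive endofunctor which is the identity on objects and an
involution on morphisms, `f : ℱ → 𝒢` a natural transformation, and
`∂ : Hom(A,B) → Hom(𝒢A, ℱB)` a ℤ-linear operation satisfying
`𝒢(φ - φ̄) = f_B ∘ ∂φ`, `ℱ(φ - φ̄) = ∂φ ∘ f_A` and the perturbed Leibniz rule, then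
for any bounded cochain complex `C` the mapping cones of `f_C : ℱC → 𝒢C` and of
`f_C̄ : ℱC̄ → 𝒢C̄` are isomorphic. -/
theorem cone_lemma (F G : 𝒞 ⥤ 𝒞) [F.Additive] [G.Additive]
    (bar : ∀ {A B : 𝒞}, (A ⟶ B) → (A ⟶ B))
    (hadd : ∀ {A B : 𝒞} (φ ψ : A ⟶ B), bar (φ + ψ) = bar φ + bar ψ)
    (hid : ∀ A : 𝒞, bar (𝟙 A) = 𝟙 A)
    (hcomp : ∀ {A B D : 𝒞} (φ : A ⟶ B) (ψ : B ⟶ D), bar (φ ≫ ψ) = bar φ ≫ bar ψ)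
    (hinvol : ∀ {A B : 𝒞} (φ : A ⟶ B), bar (bar φ) = φ)
    (f : F ⟶ G)
    (del : ∀ {A B : 𝒞}, (A ⟶ B) → (G.obj A ⟶ F.obj B))
    (hdel_sub : ∀ {A B : 𝒞} (φ ψ : A ⟶ B), del (φ - ψ) = del φ - del ψ)
    (hdelG : ∀ {A B : 𝒞} (φ : A ⟶ B), G.map (φ - bar φ) = del φ ≫ f.app B)
    (hdelF : ∀ {A B : 𝒞} (φ : A ⟶ B), F.map (φ - bar φ) = f.app A ≫ del φ)
    (hLeibniz : ∀ {A B D : 𝒞} (φ : A ⟶ B) (ψ : B ⟶ D),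
      del (φ ≫ ψ) = G.map φ ≫ del ψ + del φ ≫ F.map (bar ψ) ∧
      del (φ ≫ ψ) = G.map (bar φ) ≫ del ψ + del φ ≫ F.map ψ)
    (C : CochainComplex 𝒞 ℤ)
    (hbounded : ∃ a b : ℤ, ∀ i : ℤ, i < a ∨ b < i → IsZero (C.X i)) :
    Nonempty
      (CochainComplex.mappingCone
          ((NatTrans.mapHomologicalComplex f (ComplexShape.up ℤ)).app C) ≅
        CochainComplex.mappingCone
          ((NatTrans.mapHomologicalComplex f (ComplexShape.up ℤ)).app
            (barComplex bar hadd hcomp C))) :=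
  cone_lemma_general F G bar hadd hcomp f del hdel_sub hdelG hdelF hLeibniz C

end Stmt9
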